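/- Let D be an integral domain and ℓ a length function on D. The zero locus Z(ℓ) = {I ideal of D : ℓ(D/I) = 0} is a localizing system: if I ∈ Z(ℓ) and I ⊆ J then J ∈ Z(ℓ), and if I ∈ Z(ℓ) and (J : iD) ∈ Z(ℓ) for every i ∈ I, then J ∈ Z(ℓ). -/

import Mathlib

open scoped ENNReal

universe u

structure LengthFunction (R : Type u) [CommRing R] where
  toFun : ∀ (M : Type u) [AddCommGroup M] [Module R M], ℝ≥0∞
  zero' : ∀ (M : Type u) [AddCommGroup M] [Module R M], Subsingleton M → toFun M = 0
  additive : ∀ (M₁ M₂ M₃ : Type u) [AddCommGroup M₁] [Module R M₁]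
      [AddCommGroup M₂] [Module R M₂] [AddCommGroup M₃] [Module R M₃]
      (f : M₁ →ₗ[R] M₂) (g : M₂ →ₗ[R] M₃),
      Function.Injective f → Function.Surjective g →
      LinearMap.range f = LinearMap.ker g →
      toFun M₂ = toFun M₁ + toFun M₃
  upperContinuous : ∀ (M : Type u) [AddCommGroup M] [Module R M],
      toFun M = ⨆ (N : Submodule R M) (_ : N.FG), toFun N

/-!
Upward closure holds because `D ⧸ J` is a quotient of `D ⧸ I`. For the colon condition, let
`V ⊆ D ⧸ J` be the image of `I`. The quotient `(D ⧸ J) ⧸ V` is again a quotient of `D ⧸ I`, so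
it has length zero. The cyclic submodule generated by the class of `i ∈ I` is a quotient of
`D ⧸ (J : i)`, hence has length zero; length is subadditive on sums of submodules, so every
finitely generated submodule of `V` has length zero, and by upper continuity so does `V`.
Additivity on `0 → V → D ⧸ J → (D ⧸ J) ⧸ V → 0` finishes the proof.
-/

namespace LengthFunction

variable {R : Type u} [CommRing R] (ℓ : LengthFunction R)
variable {M M' : Type u} [AddCommGroup M] [Module R M] [AddCommGroup M'] [Module R M']

theorem toFun_eq_submodule_add_quotient (N : Submodule R M) :
    ℓ.toFun M = ℓ.toFun N + ℓ.toFun (M ⧸ N) :=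
  ℓ.additive N M (M ⧸ N) N.subtype N.mkQ N.injective_subtype N.mkQ_surjective
    (by rw [Submodule.range_subtype, Submodule.ker_mkQ])

theorem toFun_prod : ℓ.toFun (M × M') = ℓ.toFun M + ℓ.toFun M' :=
  ℓ.additive M (M × M') M' (LinearMap.inl R M M') (LinearMap.snd R M M')
    LinearMap.inl_injective LinearMap.snd_surjective (LinearMap.range_inl R M M')

theorem toFun_le_of_surjective (f : M →ₗ[R] M') (hf : Function.Surjective f) :
    ℓ.toFun M' ≤ ℓ.toFun M := by
  rw [ℓ.additive (LinearMap.ker f) M M' (LinearMap.ker f).subtype f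
    (Submodule.injective_subtype _) hf (Submodule.range_subtype _)]
  exact le_add_self

theorem toFun_congr (e : M ≃ₗ[R] M') : ℓ.toFun M = ℓ.toFun M' :=
  le_antisymm (ℓ.toFun_le_of_surjective e.symm.toLinearMap e.symm.surjective)
    (ℓ.toFun_le_of_surjective e.toLinearMap e.surjective)

theorem toFun_range_le (f : M →ₗ[R] M') : ℓ.toFun (LinearMap.range f) ≤ ℓ.toFun M :=
  ℓ.toFun_le_of_surjective f.rangeRestrict f.surjective_rangeRestrict

theorem toFun_le_quotient_of_le_ker (f : M →ₗ[R] M') (hf : Function.Surjective f)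
    {N : Submodule R M} (hN : N ≤ LinearMap.ker f) : ℓ.toFun M' ≤ ℓ.toFun (M ⧸ N) :=
  ℓ.toFun_le_of_surjective (N.liftQ f hN) fun y ↦ by
    obtain ⟨x, rfl⟩ := hf y
    exact ⟨N.mkQ x, rfl⟩

theorem toFun_quotient_le_of_le {N N' : Submodule R M} (h : N ≤ N') :
    ℓ.toFun (M ⧸ N') ≤ ℓ.toFun (M ⧸ N) :=
  ℓ.toFun_le_quotient_of_le_ker N'.mkQ N'.mkQ_surjective (by rwa [Submodule.ker_mkQ])

theorem toFun_bot : ℓ.toFun (⊥ : Submodule R M) = 0 :=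
  ℓ.zero' _ inferInstance

theorem toFun_sup_le (N₁ N₂ : Submodule R M) :
    ℓ.toFun ↥(N₁ ⊔ N₂) ≤ ℓ.toFun N₁ + ℓ.toFun N₂ := by
  have hrange : LinearMap.range (N₁.subtype.coprod N₂.subtype) = N₁ ⊔ N₂ := by
    rw [LinearMap.range_coprod, Submodule.range_subtype, Submodule.range_subtype]
  rw [← ℓ.toFun_prod, ← hrange]
  exact ℓ.toFun_range_le _

theorem toFun_span_finset_le [DecidableEq M] (s : Finset M) :
    ℓ.toFun (Submodule.span R (s : Set M)) ≤ ∑ x ∈ s, ℓ.toFun (R ∙ x) := by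
  induction s using Finset.induction_on with
  | empty => rw [Finset.coe_empty, Submodule.span_empty, toFun_bot]; exact zero_le
  | insert x s hx ih =>
    rw [Finset.coe_insert, Submodule.span_insert, Finset.sum_insert hx]
    exact (ℓ.toFun_sup_le _ _).trans (add_le_add_right ih _)

theorem toFun_eq_zero_of_forall_span_singleton (h : ∀ x : M, ℓ.toFun (R ∙ x) = 0) :
    ℓ.toFun M = 0 := by
  classical
  rw [ℓ.upperContinuous M, ENNReal.iSup_eq_zero]
  intro N
  rw [ENNReal.iSup_eq_zero]
  rintro ⟨s, rfl⟩
  simpa only [h, Finset.sum_const_zero, nonpos_iff_eq_zero] using ℓ.toFun_span_finset_le s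

theorem toFun_span_singleton_le {x : M} {I : Ideal R} (hI : I ≤ Ideal.torsionOf R M x) :
    ℓ.toFun (R ∙ x) ≤ ℓ.toFun (R ⧸ I) := by
  rw [← ℓ.toFun_congr (Ideal.quotTorsionOfEquivSpanSingleton R M x)]
  exact ℓ.toFun_quotient_le_of_le hI

end LengthFunction

theorem zero_locus_localizing_general {D : Type u} [CommRing D] (ℓ : LengthFunction D) :
    (∀ I J : Ideal D, ℓ.toFun (D ⧸ I) = 0 → I ≤ J → ℓ.toFun (D ⧸ J) = 0) ∧
    (∀ I J : Ideal D, ℓ.toFun (D ⧸ I) = 0 →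
      (∀ i ∈ I, ℓ.toFun (D ⧸ (J.colon (Ideal.span {i}))) = 0) →
      ℓ.toFun (D ⧸ J) = 0) := by
  refine ⟨fun I J hI hIJ ↦ nonpos_iff_eq_zero.mp (hI ▸ ℓ.toFun_quotient_le_of_le hIJ), ?_⟩
  intro I J hI hcolon
  set V : Submodule D (D ⧸ J) := Submodule.map J.mkQ I
  have hV : ℓ.toFun V = 0 := by
    refine ℓ.toFun_eq_zero_of_forall_span_singleton fun x ↦ ?_
    obtain ⟨i, hi, hx⟩ := x.2
    have hle : J.colon (Ideal.span {i}) ≤ Ideal.torsionOf D V x := fun r hr ↦ by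
      have hri : r • i ∈ J := Submodule.mem_colon.mp hr i (Ideal.mem_span_singleton_self i)
      rw [Ideal.mem_torsionOf_iff, ← Subtype.coe_inj, Submodule.coe_smul, ← hx,
        ← map_smul, Submodule.mkQ_apply, ZeroMemClass.coe_zero, Submodule.Quotient.mk_eq_zero]
      exact hri
    exact nonpos_iff_eq_zero.mp (hcolon i hi ▸ ℓ.toFun_span_singleton_le hle)
  have hquot : ℓ.toFun ((D ⧸ J) ⧸ V) = 0 := by
    refine nonpos_iff_eq_zero.mp (hI ▸ ℓ.toFun_le_quotient_of_le_ker (V.mkQ ∘ₗ J.mkQ)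
      (V.mkQ_surjective.comp J.mkQ_surjective) fun i hi ↦ ?_)
    rw [LinearMap.mem_ker, LinearMap.comp_apply, Submodule.mkQ_apply,
      Submodule.Quotient.mk_eq_zero]
    exact Submodule.mem_map_of_mem hi
  rw [ℓ.toFun_eq_submodule_add_quotient V, hV, hquot, add_zero]

theorem zero_locus_localizing {D : Type u} [CommRing D] [IsDomain D] (ℓ : LengthFunction D) :
    (∀ I J : Ideal D, ℓ.toFun (D ⧸ I) = 0 → I ≤ J → ℓ.toFun (D ⧸ J) = 0) ∧
    (∀ I J : Ideal D, ℓ.toFun (D ⧸ I) = 0 →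
      (∀ i ∈ I, ℓ.toFun (D ⧸ (J.colon (Ideal.span {i}))) = 0) →
      ℓ.toFun (D ⧸ J) = 0) :=
  zero_locus_localizing_general ℓ
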